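/- arXiv:1411.2833 — 5 statements merged into one kernel-verified Lean document; each statement's English description precedes it below -/
import Mathlib

section
/- Given C¹ functions g₁, g₂, g₃, g₄ on {(x,y) ∈ ℝ² : x ≤ y} and C¹ functions h⁻, h⁺ on ℝ², define ψ : Ω₁ → ℂ⁴ by ψ₁ = g₁(z₁−t₁, z₂−t₂), ψ₄ = g₄(z₁+t₁, z₂+t₂), ψ₂ = g₂(z₁−t₁, z₂+t₂) if z₁−t₁ < z₂+t₂ and ψ₂ = h⁻((−z₁+z₂+t₁+t₂)/2, (z₁+z₂−t₁+t₂)/2) otherwise, ψ₃ = g₃(z₁+t₁, z₂−t₂) if z₁+t₁ < z₂−t₂ and ψ₃ = h⁺((z₁−z₂+t₁+t₂)/2, (z₁+z₂+t₁−t₂)/2) otherwise. Then at every point of Ω₁ where ψ is differentiable, ψ satisfies the two-time massless Dirac system i∂_{t₁}ψ = −i(σ₃⊗1)∂_{z₁}ψ, i∂_{t₂}ψ = −i(1⊗σ₃)∂_{z₂}ψ, and ψ attains the initial values ψᵢ(0,z₁,0,z₂) = gᵢ(z₁,z₂) for z₁ < z₂. -/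
/-!
Each component of `ψ` depends on `(t₁, z₁, t₂, z₂)` only through the two characteristic
coordinates `z₁ ∓ t₁`, `z₂ ∓ t₂` of its own chirality: this holds for the branch condition and for
the arguments of `h∓` as well. Hence each component is constant along the corresponding
characteristic lines, and at a point of differentiability its derivative in those directions
vanishes. At `t₁ = t₂ = 0` the branch condition reduces to `z₁ < z₂`, which gives the initial
values.
-/

/-- Space-like configurations `(t₁, z₁, t₂, z₂)` with `z₁ < z₂`. -/
def Omega1 : Set (ℝ × ℝ × ℝ × ℝ) :=
  {p | (p.1 - p.2.2.1) ^ 2 - (p.2.1 - p.2.2.2) ^ 2 < 0 ∧ p.2.1 < p.2.2.2}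

theorem fderiv_apply_eq_zero_of_forall_add_smul_eq {𝕜 E F : Type*} [NontriviallyNormedField 𝕜]
    [NormedAddCommGroup E] [NormedSpace 𝕜 E] [NormedAddCommGroup F] [NormedSpace 𝕜 F]
    {f : E → F} {x v : E} (hf : DifferentiableAt 𝕜 f x) (hc : ∀ t : 𝕜, f (x + t • v) = f x) :
    fderiv 𝕜 f x v = 0 := by
  rw [← hf.lineDeriv_eq_fderiv, lineDeriv, funext hc, deriv_const]

theorem stmt_6_general
    (g1 g2 g3 g4 : ℝ × ℝ → ℂ) (hminus hplus : ℝ × ℝ → ℂ)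
    (ψ1 ψ2 ψ3 ψ4 : ℝ × ℝ × ℝ × ℝ → ℂ)
    (hψ1 : ∀ t1 z1 t2 z2 : ℝ, ψ1 (t1, z1, t2, z2) = g1 (z1 - t1, z2 - t2))
    (hψ2 : ∀ t1 z1 t2 z2 : ℝ, ψ2 (t1, z1, t2, z2) =
      if z1 - t1 < z2 + t2 then g2 (z1 - t1, z2 + t2)
      else hminus ((-z1 + z2 + t1 + t2) / 2, (z1 + z2 - t1 + t2) / 2))
    (hψ3 : ∀ t1 z1 t2 z2 : ℝ, ψ3 (t1, z1, t2, z2) =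
      if z1 + t1 < z2 - t2 then g3 (z1 + t1, z2 - t2)
      else hplus ((z1 - z2 + t1 + t2) / 2, (z1 + z2 + t1 - t2) / 2))
    (hψ4 : ∀ t1 z1 t2 z2 : ℝ, ψ4 (t1, z1, t2, z2) = g4 (z1 + t1, z2 + t2)) :
    (∀ z1 z2 : ℝ, z1 < z2 →
      ψ1 (0, z1, 0, z2) = g1 (z1, z2) ∧ ψ2 (0, z1, 0, z2) = g2 (z1, z2) ∧
      ψ3 (0, z1, 0, z2) = g3 (z1, z2) ∧ ψ4 (0, z1, 0, z2) = g4 (z1, z2)) ∧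
    (∀ p ∈ Omega1, DifferentiableAt ℝ ψ1 p →
      fderiv ℝ ψ1 p (1, 1, 0, 0) = 0 ∧ fderiv ℝ ψ1 p (0, 0, 1, 1) = 0) ∧
    (∀ p ∈ Omega1, DifferentiableAt ℝ ψ2 p →
      fderiv ℝ ψ2 p (1, 1, 0, 0) = 0 ∧ fderiv ℝ ψ2 p (0, 0, 1, -1) = 0) ∧
    (∀ p ∈ Omega1, DifferentiableAt ℝ ψ3 p →
      fderiv ℝ ψ3 p (1, -1, 0, 0) = 0 ∧ fderiv ℝ ψ3 p (0, 0, 1, 1) = 0) ∧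
    (∀ p ∈ Omega1, DifferentiableAt ℝ ψ4 p →
      fderiv ℝ ψ4 p (1, -1, 0, 0) = 0 ∧ fderiv ℝ ψ4 p (0, 0, 1, -1) = 0) := by
  refine ⟨fun z1 z2 hz => ?_, ?_, ?_, ?_, ?_⟩
  · simp only [hψ1, hψ2, hψ3, hψ4, sub_zero, add_zero, if_pos hz, and_self]
  all_goals
    rintro ⟨t1, z1, t2, z2⟩ - hd
    constructor <;> refine fderiv_apply_eq_zero_of_forall_add_smul_eq hd fun s => ?_ <;>
      simp only [Prod.mk_add_mk, Prod.smul_mk, smul_eq_mul, hψ1, hψ2, hψ3, hψ4] <;> ring_nf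

/-- The explicitly constructed `ψ` attains the initial data and, at every point of `Ω₁` where
its components are differentiable, satisfies the (diagonalized) two-time massless Dirac system:
`(∂_{t₁} + ∂_{z₁})ψ₁ = (∂_{t₂} + ∂_{z₂})ψ₁ = 0`, `(∂_{t₁} + ∂_{z₁})ψ₂ = (∂_{t₂} - ∂_{z₂})ψ₂ = 0`,
`(∂_{t₁} - ∂_{z₁})ψ₃ = (∂_{t₂} + ∂_{z₂})ψ₃ = 0`, `(∂_{t₁} - ∂_{z₁})ψ₄ = (∂_{t₂} - ∂_{z₂})ψ₄ = 0`,
which is the componentwise form of `i∂_{t₁}ψ = -i(σ₃⊗1)∂_{z₁}ψ`, `i∂_{t₂}ψ = -i(1⊗σ₃)∂_{z₂}ψ`. -/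
theorem stmt_6
    (g1 g2 g3 g4 : ℝ × ℝ → ℂ) (hminus hplus : ℝ × ℝ → ℂ)
    (hg1 : ContDiffOn ℝ 1 g1 {q : ℝ × ℝ | q.1 ≤ q.2})
    (hg2 : ContDiffOn ℝ 1 g2 {q : ℝ × ℝ | q.1 ≤ q.2})
    (hg3 : ContDiffOn ℝ 1 g3 {q : ℝ × ℝ | q.1 ≤ q.2})
    (hg4 : ContDiffOn ℝ 1 g4 {q : ℝ × ℝ | q.1 ≤ q.2})
    (hhm : ContDiff ℝ 1 hminus) (hhp : ContDiff ℝ 1 hplus)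
    (ψ1 ψ2 ψ3 ψ4 : ℝ × ℝ × ℝ × ℝ → ℂ)
    (hψ1 : ∀ t1 z1 t2 z2 : ℝ, ψ1 (t1, z1, t2, z2) = g1 (z1 - t1, z2 - t2))
    (hψ2 : ∀ t1 z1 t2 z2 : ℝ, ψ2 (t1, z1, t2, z2) =
      if z1 - t1 < z2 + t2 then g2 (z1 - t1, z2 + t2)
      else hminus ((-z1 + z2 + t1 + t2) / 2, (z1 + z2 - t1 + t2) / 2))
    (hψ3 : ∀ t1 z1 t2 z2 : ℝ, ψ3 (t1, z1, t2, z2) =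
      if z1 + t1 < z2 - t2 then g3 (z1 + t1, z2 - t2)
      else hplus ((z1 - z2 + t1 + t2) / 2, (z1 + z2 + t1 - t2) / 2))
    (hψ4 : ∀ t1 z1 t2 z2 : ℝ, ψ4 (t1, z1, t2, z2) = g4 (z1 + t1, z2 + t2)) :
    (∀ z1 z2 : ℝ, z1 < z2 →
      ψ1 (0, z1, 0, z2) = g1 (z1, z2) ∧ ψ2 (0, z1, 0, z2) = g2 (z1, z2) ∧
      ψ3 (0, z1, 0, z2) = g3 (z1, z2) ∧ ψ4 (0, z1, 0, z2) = g4 (z1, z2)) ∧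
    (∀ p ∈ Omega1, DifferentiableAt ℝ ψ1 p →
      fderiv ℝ ψ1 p (1, 1, 0, 0) = 0 ∧ fderiv ℝ ψ1 p (0, 0, 1, 1) = 0) ∧
    (∀ p ∈ Omega1, DifferentiableAt ℝ ψ2 p →
      fderiv ℝ ψ2 p (1, 1, 0, 0) = 0 ∧ fderiv ℝ ψ2 p (0, 0, 1, -1) = 0) ∧
    (∀ p ∈ Omega1, DifferentiableAt ℝ ψ3 p →
      fderiv ℝ ψ3 p (1, -1, 0, 0) = 0 ∧ fderiv ℝ ψ3 p (0, 0, 1, 1) = 0) ∧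
    (∀ p ∈ Omega1, DifferentiableAt ℝ ψ4 p →
      fderiv ℝ ψ4 p (1, -1, 0, 0) = 0 ∧ fderiv ℝ ψ4 p (0, 0, 1, -1) = 0) :=
  stmt_6_general g1 g2 g3 g4 hminus hplus ψ1 ψ2 ψ3 ψ4 hψ1 hψ2 hψ3 hψ4
end

section
/- The solution of the initial boundary value problem on Ω₁ is unique: if ψ and ψ' are both C¹ solutions of the two-time massless Dirac system on Ω₁ with the same initial data on {t₁ = t₂ = 0, z₁ < z₂} and the same boundary values ψ₃(t,z−0,t,z+0) for t ≥ 0 and ψ₂(t,z−0,t,z+0) for t < 0 on the coincidence set, then ψ = ψ' on Ω₁. -/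
open Filter Topology

/-- A `C¹` solution `(ψ₁,ψ₂,ψ₃,ψ₄)` of the (diagonalized) two-time massless Dirac system
on `Ω₁`. -/
structure DiracSolution (ψ1 ψ2 ψ3 ψ4 : ℝ × ℝ × ℝ × ℝ → ℂ) : Prop where
  smooth1 : ContDiffOn ℝ 1 ψ1 Omega1
  smooth2 : ContDiffOn ℝ 1 ψ2 Omega1
  smooth3 : ContDiffOn ℝ 1 ψ3 Omega1
  smooth4 : ContDiffOn ℝ 1 ψ4 Omega1
  pde1 : ∀ p ∈ Omega1, fderivWithin ℝ ψ1 Omega1 p (1, 1, 0, 0) = 0 ∧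
    fderivWithin ℝ ψ1 Omega1 p (0, 0, 1, 1) = 0
  pde2 : ∀ p ∈ Omega1, fderivWithin ℝ ψ2 Omega1 p (1, 1, 0, 0) = 0 ∧
    fderivWithin ℝ ψ2 Omega1 p (0, 0, 1, -1) = 0
  pde3 : ∀ p ∈ Omega1, fderivWithin ℝ ψ3 Omega1 p (1, -1, 0, 0) = 0 ∧
    fderivWithin ℝ ψ3 Omega1 p (0, 0, 1, 1) = 0
  pde4 : ∀ p ∈ Omega1, fderivWithin ℝ ψ4 Omega1 p (1, -1, 0, 0) = 0 ∧
    fderivWithin ℝ ψ4 Omega1 p (0, 0, 1, -1) = 0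

/-! `Ω₁ = {|t₁ - t₂| < z₂ - z₁}` is open and convex, and the equations say that the component
`ψᵢ` has vanishing derivative along `(1, σ₁, 0, 0)` and `(0, 0, 1, σ₂)` for signs `σ₁, σ₂`; hence
`ψᵢ` takes equal values at points of `Ω₁` sharing the invariants `z₁ - σ₁ t₁` and `z₂ - σ₂ t₂`.
Spreading a point to `pε = (t₁, z₁ - ε, t₂, z₂ + ε)` and letting `ε → 0⁺`, each `ψᵢ(pε)` is read
off either from the initial data at `t₁ = t₂ = 0` or from a point `(t, z - ε, t, z + ε)` approaching
the coincidence set, and the components carrying boundary data are exactly those whose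
characteristic through `pε` can miss the initial surface. -/

lemma mem_Omega1_iff {t1 z1 t2 z2 : ℝ} :
    ((t1, z1, t2, z2) : ℝ × ℝ × ℝ × ℝ) ∈ Omega1 ↔ t1 - t2 < z2 - z1 ∧ t2 - t1 < z2 - z1 := by
  change (t1 - t2) ^ 2 - (z1 - z2) ^ 2 < 0 ∧ z1 < z2 ↔ _
  constructor
  · rintro ⟨hsq, hz⟩
    constructor <;> nlinarith
  · rintro ⟨h1, h2⟩
    constructor <;> nlinarith

lemma Omega1_eq :
    Omega1 = {p : ℝ × ℝ × ℝ × ℝ | p.1 - p.2.2.1 < p.2.2.2 - p.2.1} ∩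
      {p : ℝ × ℝ × ℝ × ℝ | p.2.2.1 - p.1 < p.2.2.2 - p.2.1} := by
  ext ⟨t1, z1, t2, z2⟩
  exact mem_Omega1_iff

lemma isOpen_Omega1 : IsOpen Omega1 := by
  rw [Omega1_eq]
  exact (isOpen_lt (by fun_prop) (by fun_prop)).inter (isOpen_lt (by fun_prop) (by fun_prop))

lemma convex_Omega1 : Convex ℝ Omega1 := by
  refine convex_iff_forall_pos.2 ?_
  rintro ⟨t1, z1, t2, z2⟩ hx ⟨s1, y1, s2, y2⟩ hy a b ha hb -
  simp only [Prod.smul_mk, Prod.mk_add_mk, smul_eq_mul, mem_Omega1_iff] at hx hy ⊢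
  constructor
  · linarith [mul_pos ha (sub_pos.2 hx.1), mul_pos hb (sub_pos.2 hy.1)]
  · linarith [mul_pos ha (sub_pos.2 hx.2), mul_pos hb (sub_pos.2 hy.2)]

lemma Convex.apply_eq_of_fderivWithin_apply_sub_eq_zero {E F : Type*}
    [NormedAddCommGroup E] [NormedSpace ℝ E] [NormedAddCommGroup F] [NormedSpace ℝ F]
    {U : Set E} (hUc : Convex ℝ U) (hUo : IsOpen U) {g : E → F} (hg : DifferentiableOn ℝ g U)
    {x y : E} (hx : x ∈ U) (hy : y ∈ U) (h : ∀ q ∈ U, fderivWithin ℝ g U q (y - x) = 0) :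
    g x = g y := by
  set f : ℝ → F := fun s => g (x + s • (y - x))
  have hseg : ∀ s ∈ Set.Icc (0 : ℝ) 1, x + s • (y - x) ∈ U := fun s hs => by
    simpa [AffineMap.lineMap_apply_module', add_comm] using hUc.lineMap_mem hx hy hs
  have hf : ∀ s ∈ Set.Icc (0 : ℝ) 1, HasDerivAt f 0 s := by
    intro s hs
    have hgs := (hg.differentiableAt (hUo.mem_nhds (hseg s hs))).hasFDerivAt
    have hline : HasDerivAt (fun s : ℝ => x + s • (y - x)) (y - x) s := by
      simpa using ((hasDerivAt_id s).smul_const (y - x)).const_add x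
    have hcomp := hgs.comp_hasDerivAt s hline
    rwa [← fderivWithin_of_isOpen hUo (hseg s hs), h _ (hseg s hs)] at hcomp
  have := constant_of_has_deriv_right_zero (fun s hs => (hf s hs).continuousAt.continuousWithinAt)
    (fun s hs => (hf s (Set.mem_Icc_of_Ico hs)).hasDerivWithinAt) 1 (by norm_num)
  simpa [f] using this.symm

lemma apply_eq_of_char_invariants_eq {σ1 σ2 : ℝ} {g : ℝ × ℝ × ℝ × ℝ → ℂ}
    (hg : DifferentiableOn ℝ g Omega1)
    (hchar : ∀ r ∈ Omega1, fderivWithin ℝ g Omega1 r (1, σ1, 0, 0) = 0 ∧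
      fderivWithin ℝ g Omega1 r (0, 0, 1, σ2) = 0)
    {t1 z1 t2 z2 s1 y1 s2 y2 : ℝ}
    (hp : ((t1, z1, t2, z2) : ℝ × ℝ × ℝ × ℝ) ∈ Omega1)
    (hq : ((s1, y1, s2, y2) : ℝ × ℝ × ℝ × ℝ) ∈ Omega1)
    (h1 : z1 - σ1 * t1 = y1 - σ1 * s1) (h2 : z2 - σ2 * t2 = y2 - σ2 * s2) :
    g (t1, z1, t2, z2) = g (s1, y1, s2, y2) := by
  have hdir : ((s1, y1, s2, y2) : ℝ × ℝ × ℝ × ℝ) - (t1, z1, t2, z2) =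
      (s1 - t1) • (1, σ1, 0, 0) + (s2 - t2) • (0, 0, 1, σ2) := by
    simp only [Prod.mk_sub_mk, Prod.smul_mk, Prod.mk_add_mk, smul_eq_mul, Prod.mk.injEq]
    refine ⟨by ring, by linear_combination -h1, by ring, by linear_combination -h2⟩
  refine convex_Omega1.apply_eq_of_fderivWithin_apply_sub_eq_zero isOpen_Omega1 hg hp hq
    fun r hr => ?_
  rw [hdir, map_add, map_smul, map_smul, (hchar r hr).1, (hchar r hr).2, smul_zero, smul_zero,
    add_zero]

lemma spread_mem_Omega1 {t1 z1 t2 z2 ε : ℝ} (hp : ((t1, z1, t2, z2) : ℝ × ℝ × ℝ × ℝ) ∈ Omega1)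
    (hε : 0 ≤ ε) : ((t1, z1 - ε, t2, z2 + ε) : ℝ × ℝ × ℝ × ℝ) ∈ Omega1 := by
  rw [mem_Omega1_iff] at hp ⊢
  constructor <;> linarith [hp.1, hp.2]

lemma tendsto_apply_spread {g : ℝ × ℝ × ℝ × ℝ → ℂ} (hg : ContinuousOn g Omega1)
    {t1 z1 t2 z2 : ℝ} (hp : ((t1, z1, t2, z2) : ℝ × ℝ × ℝ × ℝ) ∈ Omega1) :
    Tendsto (fun ε : ℝ => g (t1, z1 - ε, t2, z2 + ε)) (𝓝[>] 0) (𝓝 (g (t1, z1, t2, z2))) := by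
  have hspread : Tendsto (fun ε : ℝ => ((t1, z1 - ε, t2, z2 + ε) : ℝ × ℝ × ℝ × ℝ)) (𝓝 0)
      (𝓝 (t1, z1, t2, z2)) := by
    simpa using (show Continuous fun ε : ℝ => ((t1, z1 - ε, t2, z2 + ε) : ℝ × ℝ × ℝ × ℝ) by
      fun_prop).tendsto 0
  exact ((hg.continuousAt (isOpen_Omega1.mem_nhds hp)).tendsto.comp hspread).mono_left
    nhdsWithin_le_nhds

lemma apply_eq_of_initialData {σ1 σ2 : ℝ} {ψ φ : ℝ × ℝ × ℝ × ℝ → ℂ}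
    (hψ : ContDiffOn ℝ 1 ψ Omega1) (hφ : ContDiffOn ℝ 1 φ Omega1)
    (hψchar : ∀ r ∈ Omega1, fderivWithin ℝ ψ Omega1 r (1, σ1, 0, 0) = 0 ∧
      fderivWithin ℝ ψ Omega1 r (0, 0, 1, σ2) = 0)
    (hφchar : ∀ r ∈ Omega1, fderivWithin ℝ φ Omega1 r (1, σ1, 0, 0) = 0 ∧
      fderivWithin ℝ φ Omega1 r (0, 0, 1, σ2) = 0)
    (hinit : ∀ z1 z2 : ℝ, z1 < z2 → ψ (0, z1, 0, z2) = φ (0, z1, 0, z2))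
    {t1 z1 t2 z2 : ℝ} (hp : ((t1, z1, t2, z2) : ℝ × ℝ × ℝ × ℝ) ∈ Omega1)
    (hfoot : z1 - σ1 * t1 ≤ z2 - σ2 * t2) :
    ψ (t1, z1, t2, z2) = φ (t1, z1, t2, z2) := by
  have hspread : ∀ ε > 0, ψ (t1, z1 - ε, t2, z2 + ε) = φ (t1, z1 - ε, t2, z2 + ε) := by
    intro ε hε
    have hfoot_mem : ((0, z1 - ε - σ1 * t1, 0, z2 + ε - σ2 * t2) : ℝ × ℝ × ℝ × ℝ) ∈ Omega1 :=
      mem_Omega1_iff.2 ⟨by linarith, by linarith⟩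
    rw [apply_eq_of_char_invariants_eq hψ.differentiableOn_one hψchar (spread_mem_Omega1 hp hε.le)
        hfoot_mem (by ring) (by ring),
      apply_eq_of_char_invariants_eq hφ.differentiableOn_one hφchar (spread_mem_Omega1 hp hε.le)
        hfoot_mem (by ring) (by ring),
      hinit _ _ (by linarith)]
  exact tendsto_nhds_unique (tendsto_apply_spread hψ.continuousOn hp)
    ((tendsto_apply_spread hφ.continuousOn hp).congr'
      (eventually_nhdsWithin_of_forall fun ε hε => (hspread ε hε).symm))

lemma apply_eq_of_boundaryValue {σ1 σ2 : ℝ} {g : ℝ × ℝ × ℝ × ℝ → ℂ}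
    (hg : ContDiffOn ℝ 1 g Omega1)
    (hchar : ∀ r ∈ Omega1, fderivWithin ℝ g Omega1 r (1, σ1, 0, 0) = 0 ∧
      fderivWithin ℝ g Omega1 r (0, 0, 1, σ2) = 0)
    {t z : ℝ} {b : ℂ} (hb : Tendsto (fun ε : ℝ => g (t, z - ε, t, z + ε)) (𝓝[>] 0) (𝓝 b))
    {t1 z1 t2 z2 : ℝ} (hp : ((t1, z1, t2, z2) : ℝ × ℝ × ℝ × ℝ) ∈ Omega1)
    (h1 : z - σ1 * t = z1 - σ1 * t1) (h2 : z - σ2 * t = z2 - σ2 * t2) :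
    g (t1, z1, t2, z2) = b := by
  have hspread : ∀ ε > 0, g (t, z - ε, t, z + ε) = g (t1, z1 - ε, t2, z2 + ε) := fun ε hε =>
    apply_eq_of_char_invariants_eq hg.differentiableOn_one hchar
      (mem_Omega1_iff.2 ⟨by linarith, by linarith⟩) (spread_mem_Omega1 hp hε.le)
      (by linear_combination h1) (by linear_combination h2)
  exact tendsto_nhds_unique (tendsto_apply_spread hg.continuousOn hp)
    (hb.congr' (eventually_nhdsWithin_of_forall hspread))

/-- Uniqueness for the initial boundary value problem on `Ω₁`: two `C¹` solutions of the
two-time massless Dirac system with the same initial data at `t₁ = t₂ = 0`, `z₁ < z₂` and the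
same boundary values (as limits towards the coincidence set: `ψ₃(t, z-0, t, z+0)` for `t ≥ 0`
and `ψ₂(t, z-0, t, z+0)` for `t < 0`) agree on `Ω₁`. -/
theorem stmt_7
    (ψ1 ψ2 ψ3 ψ4 φ1 φ2 φ3 φ4 : ℝ × ℝ × ℝ × ℝ → ℂ)
    (hψ : DiracSolution ψ1 ψ2 ψ3 ψ4) (hφ : DiracSolution φ1 φ2 φ3 φ4)
    (hinit : ∀ z1 z2 : ℝ, z1 < z2 →
      ψ1 (0, z1, 0, z2) = φ1 (0, z1, 0, z2) ∧ ψ2 (0, z1, 0, z2) = φ2 (0, z1, 0, z2) ∧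
      ψ3 (0, z1, 0, z2) = φ3 (0, z1, 0, z2) ∧ ψ4 (0, z1, 0, z2) = φ4 (0, z1, 0, z2))
    (b3 b2 : ℝ → ℝ → ℂ)
    (hbdry3ψ : ∀ t z : ℝ, 0 ≤ t →
      Tendsto (fun ε : ℝ => ψ3 (t, z - ε, t, z + ε)) (𝓝[>] 0) (𝓝 (b3 t z)))
    (hbdry3φ : ∀ t z : ℝ, 0 ≤ t →
      Tendsto (fun ε : ℝ => φ3 (t, z - ε, t, z + ε)) (𝓝[>] 0) (𝓝 (b3 t z)))
    (hbdry2ψ : ∀ t z : ℝ, t < 0 →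
      Tendsto (fun ε : ℝ => ψ2 (t, z - ε, t, z + ε)) (𝓝[>] 0) (𝓝 (b2 t z)))
    (hbdry2φ : ∀ t z : ℝ, t < 0 →
      Tendsto (fun ε : ℝ => φ2 (t, z - ε, t, z + ε)) (𝓝[>] 0) (𝓝 (b2 t z))) :
    ∀ p ∈ Omega1, ψ1 p = φ1 p ∧ ψ2 p = φ2 p ∧ ψ3 p = φ3 p ∧ ψ4 p = φ4 p := by
  rintro ⟨t1, z1, t2, z2⟩ hp
  have hcone := mem_Omega1_iff.1 hp
  refine ⟨apply_eq_of_initialData hψ.smooth1 hφ.smooth1 hψ.pde1 hφ.pde1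
      (fun a b h => (hinit a b h).1) hp (by linarith), ?_, ?_,
    apply_eq_of_initialData hψ.smooth4 hφ.smooth4 hψ.pde4 hφ.pde4
      (fun a b h => (hinit a b h).2.2.2) hp (by linarith)⟩
  · rcases lt_or_ge (z2 + t2) (z1 - t1) with hmiss | hhit
    · have ht : (z2 + t2 - (z1 - t1)) / 2 < 0 := by linarith
      rw [apply_eq_of_boundaryValue hψ.smooth2 hψ.pde2
          (hbdry2ψ _ ((z1 - t1 + (z2 + t2)) / 2) ht) hp (by ring) (by ring),
        apply_eq_of_boundaryValue hφ.smooth2 hφ.pde2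
          (hbdry2φ _ ((z1 - t1 + (z2 + t2)) / 2) ht) hp (by ring) (by ring)]
    · exact apply_eq_of_initialData hψ.smooth2 hφ.smooth2 hψ.pde2 hφ.pde2
        (fun a b h => (hinit a b h).2.1) hp (by linarith)
  · rcases le_or_gt (z2 - t2) (z1 + t1) with hmiss | hhit
    · have ht : 0 ≤ (z1 + t1 - (z2 - t2)) / 2 := by linarith
      rw [apply_eq_of_boundaryValue hψ.smooth3 hψ.pde3
          (hbdry3ψ _ ((z1 + t1 + (z2 - t2)) / 2) ht) hp (by ring) (by ring),
        apply_eq_of_boundaryValue hφ.smooth3 hφ.pde3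
          (hbdry3φ _ ((z1 + t1 + (z2 - t2)) / 2) ht) hp (by ring) (by ring)]
    · exact apply_eq_of_initialData hψ.smooth3 hφ.smooth3 hψ.pde3 hφ.pde3
        (fun a b h => (hinit a b h).2.2.1) hp (by linarith)
end

section
/- Let ψ : Ω → ℂ⁴ be a C¹ solution of the two-time massless Dirac system and define the tensor current j^{μν} = ψ† (γ₁⁰γ₂⁰ γ₁^μ γ₂^ν) ψ for μ,ν ∈ {0,1}, where γ⁰ = σ₁, γ¹ = σ₁σ₃, γ₁^μ = γ^μ⊗1, γ₂^ν = 1⊗γ^ν. Then the continuity equations ∂_{t₁} j^{0ν} + ∂_{z₁} j^{1ν} = 0 and ∂_{t₂} j^{μ0} + ∂_{z₂} j^{μ1} = 0 hold on Ω. -/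
open Matrix Kronecker

noncomputable section

/-- Pauli matrix `σ₁`. -/
def pauli1 : Matrix (Fin 2) (Fin 2) ℂ := !![0, 1; 1, 0]

/-- Pauli matrix `σ₃`. -/
def pauli3 : Matrix (Fin 2) (Fin 2) ℂ := !![1, 0; 0, -1]

/-- The 1+1 dimensional gamma matrices `γ⁰ = σ₁`, `γ¹ = σ₁σ₃`. -/
def gam : Fin 2 → Matrix (Fin 2) (Fin 2) ℂ := fun μ => if μ = 0 then pauli1 else pauli1 * pauli3

/-- `γ₁^μ = γ^μ ⊗ 1`. -/
def Gam1 (μ : Fin 2) : Matrix (Fin 2 × Fin 2) (Fin 2 × Fin 2) ℂ := gam μ ⊗ₖ (1 : Matrix (Fin 2) (Fin 2) ℂ)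

/-- `γ₂^ν = 1 ⊗ γ^ν`. -/
def Gam2 (ν : Fin 2) : Matrix (Fin 2 × Fin 2) (Fin 2 × Fin 2) ℂ := (1 : Matrix (Fin 2) (Fin 2) ℂ) ⊗ₖ gam ν

/-- The tensor current `j^{μν} = ψ† γ₁⁰γ₂⁰ γ₁^μ γ₂^ν ψ`. -/
def curr (ψ : Fin 2 × Fin 2 → ℂ) (μ ν : Fin 2) : ℂ :=
  star ψ ⬝ᵥ ((Gam1 0 * Gam2 0 * Gam1 μ * Gam2 ν) *ᵥ ψ)

/-!
The current matrix factors as `γ₁⁰γ₂⁰γ₁^μγ₂^ν = σ₁γ^μ ⊗ σ₁γ^ν`, and `σ₁γ⁰ = 1`, `σ₁γ¹ = σ₃`.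
Hence `j^{1ν} = ψ†SAψ` and `j^{0ν} = ψ†Aψ` with `S = σ₃ ⊗ 1` Hermitian and commuting with
`A = 1 ⊗ σ₁γ^ν`. If `∂ₜψ = -S∂_zψ`, the product rule for `ψ†Aψ`, after moving `S` across the
inner product and past `A`, gives exactly `-∂_z(ψ†SAψ)`. The second equation is symmetric.
-/

section DotProduct

variable {𝕜 E 𝔸 n : Type*} [NontriviallyNormedField 𝕜] [NormedAddCommGroup E] [NormedSpace 𝕜 E]
  [NormedCommRing 𝔸] [NormedAlgebra 𝕜 𝔸] [Fintype n]

theorem fderiv_dotProduct_apply {f g : E → n → 𝔸} {f' g' : E →L[𝕜] n → 𝔸} {x : E}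
    (hf : HasFDerivAt f f' x) (hg : HasFDerivAt g g' x) (v : E) :
    fderiv 𝕜 (fun y => f y ⬝ᵥ g y) x v = f x ⬝ᵥ g' v + f' v ⬝ᵥ g x := by
  have hsum := HasFDerivAt.fun_sum (u := Finset.univ)
    fun i _ => (hasFDerivAt_pi'.1 hf i).fun_mul (hasFDerivAt_pi'.1 hg i)
  rw [show (fun y => f y ⬝ᵥ g y) = fun y => ∑ i, f y i * g y i from rfl, hsum.fderiv]
  simp [dotProduct, Finset.sum_add_distrib, mul_comm]

end DotProduct

section Conservation

variable {E n : Type*} [NormedAddCommGroup E] [NormedSpace ℝ E] [Fintype n]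

theorem fderiv_star_dotProduct_mulVec_apply {ψ : E → n → ℂ} {x : E} (hψ : DifferentiableAt ℝ ψ x)
    (M : Matrix n n ℂ) (v : E) :
    fderiv ℝ (fun y => star (ψ y) ⬝ᵥ (M *ᵥ ψ y)) x v =
      star (ψ x) ⬝ᵥ (M *ᵥ fderiv ℝ ψ x v) + star (fderiv ℝ ψ x v) ⬝ᵥ (M *ᵥ ψ x) := by
  let mulVecL : (n → ℂ) →L[ℝ] n → ℂ :=
    LinearMap.toContinuousLinearMap ((Matrix.mulVecLin M).restrictScalars ℝ)
  have hMψ : HasFDerivAt (fun y => M *ᵥ ψ y) (mulVecL.comp (fderiv ℝ ψ x)) x :=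
    mulVecL.hasFDerivAt.comp x hψ.hasFDerivAt
  rw [fderiv_dotProduct_apply hψ.hasFDerivAt.star hMψ]
  rfl

theorem fderiv_star_dotProduct_mulVec_add_eq_zero {ψ : E → n → ℂ} {x : E}
    (hψ : DifferentiableAt ℝ ψ x) {S A : Matrix n n ℂ} (hS : Sᴴ = S) (hSA : Commute S A)
    {t z : E} (hwave : fderiv ℝ ψ x t = -(S *ᵥ fderiv ℝ ψ x z)) :
    fderiv ℝ (fun y => star (ψ y) ⬝ᵥ (A *ᵥ ψ y)) x t +
      fderiv ℝ (fun y => star (ψ y) ⬝ᵥ ((S * A) *ᵥ ψ y)) x z = 0 := by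
  rw [fderiv_star_dotProduct_mulVec_apply hψ, fderiv_star_dotProduct_mulVec_apply hψ, hwave]
  set w := fderiv ℝ ψ x z
  have hleft : star (S *ᵥ w) ⬝ᵥ (A *ᵥ ψ x) = star w ⬝ᵥ ((S * A) *ᵥ ψ x) := by
    rw [Matrix.star_mulVec, ← Matrix.dotProduct_mulVec, hS, Matrix.mulVec_mulVec]
  have hright : star (ψ x) ⬝ᵥ (A *ᵥ (S *ᵥ w)) = star (ψ x) ⬝ᵥ ((S * A) *ᵥ w) := by
    rw [Matrix.mulVec_mulVec, hSA.eq]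
  simp only [star_neg, Matrix.mulVec_neg, dotProduct_neg, neg_dotProduct, hleft, hright]
  ring

end Conservation

def currMat (μ ν : Fin 2) : Matrix (Fin 2 × Fin 2) (Fin 2 × Fin 2) ℂ :=
  Gam1 0 * Gam2 0 * Gam1 μ * Gam2 ν

theorem pauli1_mul_gam_zero : pauli1 * gam 0 = 1 := by
  ext i j
  fin_cases i <;> fin_cases j <;> simp [pauli1, gam, Matrix.mul_apply, Fin.sum_univ_two]

theorem pauli1_mul_gam_one : pauli1 * gam 1 = pauli3 := by
  ext i j
  fin_cases i <;> fin_cases j <;> simp [pauli1, pauli3, gam, Matrix.mul_apply, Fin.sum_univ_two]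

theorem conjTranspose_pauli3 : pauli3ᴴ = pauli3 := by
  ext i j
  fin_cases i <;> fin_cases j <;> simp [pauli3]

theorem currMat_eq_kronecker (μ ν : Fin 2) :
    currMat μ ν = (pauli1 * gam μ) ⊗ₖ (pauli1 * gam ν) := by
  have hgam : gam 0 = pauli1 := rfl
  simp only [currMat, Gam1, Gam2, hgam, ← Matrix.mul_kronecker_mul, Matrix.one_mul, Matrix.mul_one]

theorem currMat_one_left (ν : Fin 2) : currMat 1 ν = (pauli3 ⊗ₖ 1) * currMat 0 ν := by
  rw [currMat_eq_kronecker, currMat_eq_kronecker, ← Matrix.mul_kronecker_mul,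
    pauli1_mul_gam_zero, pauli1_mul_gam_one, Matrix.mul_one, Matrix.one_mul]

theorem currMat_one_right (μ : Fin 2) : currMat μ 1 = (1 ⊗ₖ pauli3) * currMat μ 0 := by
  rw [currMat_eq_kronecker, currMat_eq_kronecker, ← Matrix.mul_kronecker_mul,
    pauli1_mul_gam_zero, pauli1_mul_gam_one, Matrix.mul_one, Matrix.one_mul]

theorem commute_pauli3_kronecker_one_currMat_zero (ν : Fin 2) :
    Commute (pauli3 ⊗ₖ (1 : Matrix (Fin 2) (Fin 2) ℂ)) (currMat 0 ν) := by
  rw [currMat_eq_kronecker, pauli1_mul_gam_zero, Commute, SemiconjBy,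
    ← Matrix.mul_kronecker_mul, ← Matrix.mul_kronecker_mul]
  simp

theorem commute_one_kronecker_pauli3_currMat_zero (μ : Fin 2) :
    Commute ((1 : Matrix (Fin 2) (Fin 2) ℂ) ⊗ₖ pauli3) (currMat μ 0) := by
  rw [currMat_eq_kronecker, pauli1_mul_gam_zero, Commute, SemiconjBy,
    ← Matrix.mul_kronecker_mul, ← Matrix.mul_kronecker_mul]
  simp

/-- If `ψ : Ω → ℂ⁴` is a `C¹` solution of the two-time massless Dirac system
`i∂_{t₁}ψ = -i(σ₃⊗1)∂_{z₁}ψ`, `i∂_{t₂}ψ = -i(1⊗σ₃)∂_{z₂}ψ` on an open set `Ω` of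
configurations `(t₁, z₁, t₂, z₂)`, then the tensor current satisfies the continuity
equations `∂_{t₁}j^{0ν} + ∂_{z₁}j^{1ν} = 0` and `∂_{t₂}j^{μ0} + ∂_{z₂}j^{μ1} = 0` on `Ω`. -/
theorem stmt_8 (Ω : Set (ℝ × ℝ × ℝ × ℝ)) (hΩ : IsOpen Ω)
    (ψ : ℝ × ℝ × ℝ × ℝ → (Fin 2 × Fin 2 → ℂ)) (hC1 : ContDiffOn ℝ 1 ψ Ω)
    (hpde1 : ∀ p ∈ Ω, Complex.I • fderivWithin ℝ ψ Ω p (1, 0, 0, 0) =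
      (-Complex.I) • ((pauli3 ⊗ₖ (1 : Matrix (Fin 2) (Fin 2) ℂ)) *ᵥ
        fderivWithin ℝ ψ Ω p (0, 1, 0, 0)))
    (hpde2 : ∀ p ∈ Ω, Complex.I • fderivWithin ℝ ψ Ω p (0, 0, 1, 0) =
      (-Complex.I) • (((1 : Matrix (Fin 2) (Fin 2) ℂ) ⊗ₖ pauli3) *ᵥ
        fderivWithin ℝ ψ Ω p (0, 0, 0, 1))) :
    ∀ p ∈ Ω,
      (∀ ν : Fin 2,
        fderivWithin ℝ (fun q => curr (ψ q) 0 ν) Ω p (1, 0, 0, 0) +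
          fderivWithin ℝ (fun q => curr (ψ q) 1 ν) Ω p (0, 1, 0, 0) = 0) ∧
      (∀ μ : Fin 2,
        fderivWithin ℝ (fun q => curr (ψ q) μ 0) Ω p (0, 0, 1, 0) +
          fderivWithin ℝ (fun q => curr (ψ q) μ 1) Ω p (0, 0, 0, 1) = 0) := by
  intro p hp
  have hψ : DifferentiableAt ℝ ψ p := (hC1.contDiffAt (hΩ.mem_nhds hp)).differentiableAt one_ne_zero
  have cancel_I : ∀ u w : Fin 2 × Fin 2 → ℂ, Complex.I • u = (-Complex.I) • w → u = -w :=
    fun u w h => smul_right_injective _ Complex.I_ne_zero (by simpa only [smul_neg, ← neg_smul])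
  have hwave1 := cancel_I _ _ (hpde1 p hp)
  have hwave2 := cancel_I _ _ (hpde2 p hp)
  simp only [fderivWithin_of_isOpen hΩ hp] at hwave1 hwave2 ⊢
  refine ⟨fun ν => ?_, fun μ => ?_⟩
  · have h := fderiv_star_dotProduct_mulVec_add_eq_zero hψ
      (by rw [Matrix.conjTranspose_kronecker, conjTranspose_pauli3, Matrix.conjTranspose_one])
      (commute_pauli3_kronecker_one_currMat_zero ν) hwave1
    rwa [← currMat_one_left] at h
  · have h := fderiv_star_dotProduct_mulVec_add_eq_zero hψ
      (by rw [Matrix.conjTranspose_kronecker, conjTranspose_pauli3, Matrix.conjTranspose_one])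
      (commute_one_kronecker_pauli3_currMat_zero μ) hwave2
    rwa [← currMat_one_right] at h

end
end

section
/- Let φ̃, χ̃ : ℝ → ℂ with supp φ̃ ⊆ [a,b], supp χ̃ ⊆ [c,d], a < b < c < d, and define on Ω₁ the function ψ with ψ₁ ≡ ψ₄ ≡ 0, ψ₂(t₁,z₁,t₂,z₂) = φ̃(z₁−t₁)χ̃(z₂+t₂)·Θ(−z₁+t₁+z₂+t₂), and ψ₃(t₁,z₁,t₂,z₂) = e^{iθ₁((z₁−z₂+t₁+t₂)/2, (z₁+z₂+t₁−t₂)/2)} φ̃(z₂−t₂)χ̃(z₁+t₁)·Θ(z₁+t₁−z₂+t₂), where Θ is the Heaviside function and θ₁ : ℝ² → ℝ. Then ψ satisfies: (i) the initial conditions ψ₂(0,z₁,0,z₂) = φ̃(z₁)χ̃(z₂) and ψᵢ(0,z₁,0,z₂) = 0 for i = 1,3,4 on {z₁ < z₂}; (ii) the boundary condition ψ₂(t,z−0,t,z+0) = e^{−iθ₁(t,z)}ψ₃(t,z−0,t,z+0) for all t,z; and (iii) each component is constant along its corresponding characteristic (ψ₂ depends only on (z₁−t₁, z₂+t₂), ψ₃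 only on (z₁+t₁, z₂−t₂)). -/
/-!
Because `φ̃` lives to the left of `χ̃` (`b < c`), on the support of `φ̃(u) χ̃(v)` we always have
`u ≤ b < c ≤ v`, so the Heaviside factors `Θ(v - u)` are identically `1` there and both
components are plain products of the data along characteristics. The initial and characteristic
conditions are then immediate, and the boundary defect is a continuous function of `ε` which
vanishes at `ε = 0`, where the two phases `e^{-iθ₁(t,z)}` and `e^{iθ₁(t,z)}` cancel.
-/

open Filter Topology

noncomputable def heaviside (x : ℝ) : ℝ := if 0 ≤ x then 1 else 0

open Function Set

lemma heaviside_of_nonneg {x : ℝ} (hx : 0 ≤ x) : heaviside x = 1 := if_pos hx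

lemma heaviside_of_neg {x : ℝ} (hx : x < 0) : heaviside x = 0 := if_neg (not_le.2 hx)

lemma mul_mul_heaviside_sub_of_support_subset {f g : ℝ → ℂ} {b c : ℝ} (hbc : b ≤ c)
    (hf : support f ⊆ Iic b) (hg : support g ⊆ Ici c) (u v : ℝ) :
    f u * g v * (heaviside (v - u) : ℂ) = f u * g v := by
  by_cases hu : f u = 0
  · simp [hu]
  by_cases hv : g v = 0
  · simp [hv]
  have hub : u ≤ b := hf hu
  have hcv : c ≤ v := hg hv
  rw [heaviside_of_nonneg (by linarith), Complex.ofReal_one, mul_one]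

lemma tendsto_boundary_defect {φ χ : ℝ → ℂ} (hφ : Continuous φ) (hχ : Continuous χ)
    {θ : ℝ → ℝ → ℝ} (hθ : Continuous (uncurry θ)) (t z : ℝ) :
    Tendsto (fun ε : ℝ => φ (z - ε - t) * χ (z + ε + t) -
        Complex.exp (-(θ t z : ℂ) * Complex.I) *
          (Complex.exp (θ (t - ε) z * Complex.I) * (φ (z + ε - t) * χ (z - ε + t))))
      (𝓝 0) (𝓝 0) := by
  have hθt : Continuous fun ε : ℝ => θ (t - ε) z :=
    hθ.comp (by fun_prop : Continuous fun ε : ℝ => (t - ε, z))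
  have hcont : Continuous (fun ε : ℝ => φ (z - ε - t) * χ (z + ε + t) -
      Complex.exp (-(θ t z : ℂ) * Complex.I) *
        (Complex.exp (θ (t - ε) z * Complex.I) * (φ (z + ε - t) * χ (z - ε + t)))) := by
    fun_prop
  convert hcont.tendsto 0 using 2
  simp only [sub_zero, add_zero, ← mul_assoc, ← Complex.exp_add, neg_mul, neg_add_cancel,
    Complex.exp_zero, one_mul, sub_self]

theorem stmt_17_general (a b c d : ℝ) (hbc : b < c)
    (φ χ : ℝ → ℂ) (hφc : Continuous φ) (hχc : Continuous χ)
    (hφsupp : ∀ x : ℝ, x ∉ Set.Icc a b → φ x = 0)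
    (hχsupp : ∀ x : ℝ, x ∉ Set.Icc c d → χ x = 0)
    (θ1 : ℝ → ℝ → ℝ) (hθ1 : Continuous fun q : ℝ × ℝ => θ1 q.1 q.2)
    (ψ1 ψ2 ψ3 ψ4 : ℝ × ℝ × ℝ × ℝ → ℂ)
    (hψ1 : ∀ p, ψ1 p = 0) (hψ4 : ∀ p, ψ4 p = 0)
    (hψ2 : ∀ t1 z1 t2 z2 : ℝ, ψ2 (t1, z1, t2, z2) =
      φ (z1 - t1) * χ (z2 + t2) * (heaviside (-z1 + t1 + z2 + t2) : ℝ))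
    (hψ3 : ∀ t1 z1 t2 z2 : ℝ, ψ3 (t1, z1, t2, z2) =
      Complex.exp ((θ1 ((z1 - z2 + t1 + t2) / 2) ((z1 + z2 + t1 - t2) / 2) : ℂ) *
          Complex.I) *
        φ (z2 - t2) * χ (z1 + t1) * (heaviside (z1 + t1 - z2 + t2) : ℝ)) :
    -- (i) initial conditions on {z₁ < z₂}
    (∀ z1 z2 : ℝ, z1 < z2 →
      ψ2 (0, z1, 0, z2) = φ z1 * χ z2 ∧ ψ1 (0, z1, 0, z2) = 0 ∧
      ψ3 (0, z1, 0, z2) = 0 ∧ ψ4 (0, z1, 0, z2) = 0) ∧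
    -- (ii) boundary condition ψ₂(t,z-0,t,z+0) = e^{-iθ₁(t,z)} ψ₃(t,z-0,t,z+0)
    (∀ t z : ℝ,
      Tendsto (fun ε : ℝ => ψ2 (t, z - ε, t, z + ε) -
          Complex.exp (-(θ1 t z : ℂ) * Complex.I) * ψ3 (t, z - ε, t, z + ε))
        (𝓝[>] 0) (𝓝 0)) ∧
    -- (iii) ψ₂ depends only on (z₁-t₁, z₂+t₂) and ψ₃ only on (z₁+t₁, z₂-t₂)
    (∀ t1 z1 t2 z2 t1' z1' t2' z2' : ℝ, z1 - t1 = z1' - t1' → z2 + t2 = z2' + t2' →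
      ψ2 (t1, z1, t2, z2) = ψ2 (t1', z1', t2', z2')) ∧
    (∀ t1 z1 t2 z2 t1' z1' t2' z2' : ℝ, z1 + t1 = z1' + t1' → z2 - t2 = z2' - t2' →
      ψ3 (t1, z1, t2, z2) = ψ3 (t1', z1', t2', z2')) := by
  have hφ : support φ ⊆ Iic b := fun x hx => (not_not.1 (mt (hφsupp x) hx)).2
  have hχ : support χ ⊆ Ici c := fun x hx => (not_not.1 (mt (hχsupp x) hx)).1
  have hprod := mul_mul_heaviside_sub_of_support_subset hbc.le hφ hχ
  have hψ2' : ∀ t1 z1 t2 z2 : ℝ, ψ2 (t1, z1, t2, z2) = φ (z1 - t1) * χ (z2 + t2) := by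
    intro t1 z1 t2 z2
    rw [hψ2, show -z1 + t1 + z2 + t2 = (z2 + t2) - (z1 - t1) by ring, hprod]
  have hψ3' : ∀ t1 z1 t2 z2 : ℝ, ψ3 (t1, z1, t2, z2) =
      Complex.exp (θ1 ((z1 - z2 + t1 + t2) / 2) ((z1 + z2 + t1 - t2) / 2) * Complex.I) *
        (φ (z2 - t2) * χ (z1 + t1)) := by
    intro t1 z1 t2 z2
    rw [hψ3, show z1 + t1 - z2 + t2 = (z1 + t1) - (z2 - t2) by ring, mul_assoc _ (φ _),
      mul_assoc, hprod]
  refine ⟨fun z1 z2 hz => ⟨?_, hψ1 _, ?_, hψ4 _⟩, fun t z => ?_, ?_, ?_⟩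
  · simp [hψ2']
  · rw [hψ3, heaviside_of_neg (by linarith)]
    simp
  · convert (tendsto_boundary_defect hφc hχc hθ1 t z).mono_left nhdsWithin_le_nhds using 2
    rw [hψ2', hψ3']
    ring_nf
  · intro t1 z1 t2 z2 t1' z1' t2' z2' h1 h2
    rw [hψ2', hψ2', h1, h2]
  · intro t1 z1 t2 z2 t1' z1' t2' z2' h1 h2
    rw [hψ3', hψ3']
    congr 5 <;> linarith

/-- The explicitly evolved initially well-localized product wave function: it attains the
product initial data, satisfies the probability-conserving boundary condition with phase
`θ₁` (as a limit towards the coincidence set), and each nonzero component is constant along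
its multi-time characteristic. -/
theorem stmt_17 (a b c d : ℝ) (hab : a < b) (hbc : b < c) (hcd : c < d)
    (φ χ : ℝ → ℂ) (hφc : Continuous φ) (hχc : Continuous χ)
    (hφsupp : ∀ x : ℝ, x ∉ Set.Icc a b → φ x = 0)
    (hχsupp : ∀ x : ℝ, x ∉ Set.Icc c d → χ x = 0)
    (θ1 : ℝ → ℝ → ℝ) (hθ1 : Continuous fun q : ℝ × ℝ => θ1 q.1 q.2)
    (ψ1 ψ2 ψ3 ψ4 : ℝ × ℝ × ℝ × ℝ → ℂ)
    (hψ1 : ∀ p, ψ1 p = 0) (hψ4 : ∀ p, ψ4 p = 0)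
    (hψ2 : ∀ t1 z1 t2 z2 : ℝ, ψ2 (t1, z1, t2, z2) =
      φ (z1 - t1) * χ (z2 + t2) * (heaviside (-z1 + t1 + z2 + t2) : ℝ))
    (hψ3 : ∀ t1 z1 t2 z2 : ℝ, ψ3 (t1, z1, t2, z2) =
      Complex.exp ((θ1 ((z1 - z2 + t1 + t2) / 2) ((z1 + z2 + t1 - t2) / 2) : ℂ) *
          Complex.I) *
        φ (z2 - t2) * χ (z1 + t1) * (heaviside (z1 + t1 - z2 + t2) : ℝ)) :
    -- (i) initial conditions on {z₁ < z₂}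
    (∀ z1 z2 : ℝ, z1 < z2 →
      ψ2 (0, z1, 0, z2) = φ z1 * χ z2 ∧ ψ1 (0, z1, 0, z2) = 0 ∧
      ψ3 (0, z1, 0, z2) = 0 ∧ ψ4 (0, z1, 0, z2) = 0) ∧
    -- (ii) boundary condition ψ₂(t,z-0,t,z+0) = e^{-iθ₁(t,z)} ψ₃(t,z-0,t,z+0)
    (∀ t z : ℝ,
      Tendsto (fun ε : ℝ => ψ2 (t, z - ε, t, z + ε) -
          Complex.exp (-(θ1 t z : ℂ) * Complex.I) * ψ3 (t, z - ε, t, z + ε))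
        (𝓝[>] 0) (𝓝 0)) ∧
    -- (iii) ψ₂ depends only on (z₁-t₁, z₂+t₂) and ψ₃ only on (z₁+t₁, z₂-t₂)
    (∀ t1 z1 t2 z2 t1' z1' t2' z2' : ℝ, z1 - t1 = z1' - t1' → z2 + t2 = z2' + t2' →
      ψ2 (t1, z1, t2, z2) = ψ2 (t1', z1', t2', z2')) ∧
    (∀ t1 z1 t2 z2 t1' z1' t2' z2' : ℝ, z1 + t1 = z1' + t1' → z2 - t2 = z2' - t2' →
      ψ3 (t1, z1, t2, z2) = ψ3 (t1', z1', t2', z2')) :=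
  stmt_17_general a b c d hbc φ χ hφc hχc hφsupp hχsupp θ1 hθ1 ψ1 ψ2 ψ3 ψ4 hψ1 hψ4 hψ2 hψ3
end

section
/- Let ψ : Ω₁ → ℂ⁴ be given by the explicit solution formula with compactly supported initial data: ψ₁ = g₁(z₁−t₁,z₂−t₂), ψ₄ = g₄(z₁+t₁,z₂+t₂), ψ₂ and ψ₃ defined case-wise from g₂, g₃, h₁⁻, h₁⁺ as in the explicit solution, where g₁,…,g₄ have compact support in {(x,y) : x ≤ y} and h₁^± have compact support in ℝ². Then for every T > 0 there exists R > 0 such that ψ(t₁,z₁,t₂,z₂) = 0 whenever |t₁| ≤ T, |t₂| ≤ T and |z₁| + |z₂| > R. -/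
/-!
Every component of `ψ` is one of the compactly supported data evaluated at an affine image of
`(z₁, z₂)`: either a shift `(z₁ ± t₁, z₂ ± t₂)` or the characteristic coordinates
`(±(z₂ - z₁)/2, (z₁ + z₂)/2)` shifted by `(±t₁ ± t₂)/2`. Since `|z₁| + |z₂|` is at most
`|z₂ - z₁| + |z₁ + z₂|`, and `|t₁|, |t₂| ≤ T`, the size of each argument is bounded below by
`(|z₁| + |z₂|)/2` minus a constant depending on `T`, so for `|z₁| + |z₂|` large every argument
leaves the supports.
-/

lemma HasCompactSupport.exists_pos_eq_zero_of_lt_abs_add_abs {F : Type*} [Zero F]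
    {g : ℝ × ℝ → F} (hg : HasCompactSupport g) :
    ∃ M : ℝ, 0 < M ∧ ∀ x y : ℝ, M < |x| + |y| → g (x, y) = 0 := by
  obtain ⟨R, hR, hgR⟩ := hg.exists_pos_le_norm
  refine ⟨2 * R, by positivity, fun x y hxy => hgR _ ?_⟩
  rw [Prod.norm_mk, Real.norm_eq_abs, Real.norm_eq_abs]
  linarith [le_max_left |x| |y|, le_max_right |x| |y|]

lemma lt_abs_add_abs_of_eq_add (x y : ℝ) {u v s r T M : ℝ} (hx : x = u + s) (hy : y = v + r)
    (hs : |s| ≤ T) (hr : |r| ≤ T) (h : M + 2 * T < |x| + |y|) : M < |u| + |v| := by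
  rw [hx, hy] at h
  linarith [abs_add_le u s, abs_add_le v r]

lemma lt_abs_add_abs_of_eq_two_mul_add (x y : ℝ) {a b s₁ s₂ r₁ r₂ T M : ℝ}
    (ha : y - x = 2 * a + s₁ + s₂) (hb : x + y = 2 * b + r₁ + r₂)
    (hs₁ : |s₁| ≤ T) (hs₂ : |s₂| ≤ T) (hr₁ : |r₁| ≤ T) (hr₂ : |r₂| ≤ T)
    (h : 2 * M + 4 * T < |x| + |y|) : M < |a| + |b| := by
  have hxy : |x| + |y| ≤ |y - x| + |x + y| := by
    rcases abs_cases x with ⟨hx, _⟩ | ⟨hx, _⟩ <;> rcases abs_cases y with ⟨hy, _⟩ | ⟨hy, _⟩ <;>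
      linarith [le_abs_self (y - x), neg_abs_le (y - x), le_abs_self (x + y), neg_abs_le (x + y)]
  have h2a : |2 * a + s₁ + s₂| ≤ 2 * |a| + |s₁| + |s₂| := by
    calc |2 * a + s₁ + s₂| ≤ |2 * a| + |s₁| + |s₂| := abs_add_three _ _ _
      _ = 2 * |a| + |s₁| + |s₂| := by rw [abs_mul, abs_two]
  have h2b : |2 * b + r₁ + r₂| ≤ 2 * |b| + |r₁| + |r₂| := by
    calc |2 * b + r₁ + r₂| ≤ |2 * b| + |r₁| + |r₂| := abs_add_three _ _ _
      _ = 2 * |b| + |r₁| + |r₂| := by rw [abs_mul, abs_two]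
  rw [ha, hb] at hxy
  linarith

theorem stmt_19_general
    (g1 g2 g3 g4 : ℝ × ℝ → ℂ) (hminus hplus : ℝ × ℝ → ℂ)
    (hg1supp : HasCompactSupport g1) (hg2supp : HasCompactSupport g2)
    (hg3supp : HasCompactSupport g3) (hg4supp : HasCompactSupport g4)
    (hhmsupp : HasCompactSupport hminus) (hhpsupp : HasCompactSupport hplus)
    (ψ1 ψ2 ψ3 ψ4 : ℝ × ℝ × ℝ × ℝ → ℂ)
    (hψ1 : ∀ t1 z1 t2 z2 : ℝ, ψ1 (t1, z1, t2, z2) = g1 (z1 - t1, z2 - t2))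
    (hψ2 : ∀ t1 z1 t2 z2 : ℝ, ψ2 (t1, z1, t2, z2) =
      if z1 - t1 < z2 + t2 then g2 (z1 - t1, z2 + t2)
      else hminus ((-z1 + z2 + t1 + t2) / 2, (z1 + z2 - t1 + t2) / 2))
    (hψ3 : ∀ t1 z1 t2 z2 : ℝ, ψ3 (t1, z1, t2, z2) =
      if z1 + t1 < z2 - t2 then g3 (z1 + t1, z2 - t2)
      else hplus ((z1 - z2 + t1 + t2) / 2, (z1 + z2 + t1 - t2) / 2))
    (hψ4 : ∀ t1 z1 t2 z2 : ℝ, ψ4 (t1, z1, t2, z2) = g4 (z1 + t1, z2 + t2)) :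
    ∀ T : ℝ, 0 < T → ∃ R : ℝ, 0 < R ∧
      ∀ t1 z1 t2 z2 : ℝ, (t1, z1, t2, z2) ∈ Omega1 → |t1| ≤ T → |t2| ≤ T →
        R < |z1| + |z2| →
        ψ1 (t1, z1, t2, z2) = 0 ∧ ψ2 (t1, z1, t2, z2) = 0 ∧
        ψ3 (t1, z1, t2, z2) = 0 ∧ ψ4 (t1, z1, t2, z2) = 0 := by
  intro T hT
  obtain ⟨M1, hM1, hg1⟩ := hg1supp.exists_pos_eq_zero_of_lt_abs_add_abs
  obtain ⟨M2, hM2, hg2⟩ := hg2supp.exists_pos_eq_zero_of_lt_abs_add_abs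
  obtain ⟨M3, hM3, hg3⟩ := hg3supp.exists_pos_eq_zero_of_lt_abs_add_abs
  obtain ⟨M4, hM4, hg4⟩ := hg4supp.exists_pos_eq_zero_of_lt_abs_add_abs
  obtain ⟨M5, hM5, hhm⟩ := hhmsupp.exists_pos_eq_zero_of_lt_abs_add_abs
  obtain ⟨M6, hM6, hhp⟩ := hhpsupp.exists_pos_eq_zero_of_lt_abs_add_abs
  refine ⟨2 * (M1 + M2 + M3 + M4 + M5 + M6) + 4 * T + 1, by positivity, ?_⟩
  intro t1 z1 t2 z2 _ ht1 ht2 hR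
  have ht1' : |-t1| ≤ T := by rwa [abs_neg]
  have ht2' : |-t2| ≤ T := by rwa [abs_neg]
  refine ⟨?_, ?_, ?_, ?_⟩
  · rw [hψ1]
    exact hg1 _ _ (lt_abs_add_abs_of_eq_add z1 z2 (by ring) (by ring) ht1 ht2 (by linarith))
  · rw [hψ2]
    split_ifs
    · exact hg2 _ _ (lt_abs_add_abs_of_eq_add z1 z2 (by ring) (by ring) ht1 ht2' (by linarith))
    · exact hhm _ _ (lt_abs_add_abs_of_eq_two_mul_add z1 z2 (by ring) (by ring)
        ht1' ht2' ht1 ht2' (by linarith))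
  · rw [hψ3]
    split_ifs
    · exact hg3 _ _ (lt_abs_add_abs_of_eq_add z1 z2 (by ring) (by ring) ht1' ht2 (by linarith))
    · exact hhp _ _ (lt_abs_add_abs_of_eq_two_mul_add z2 z1 (by ring) (by ring)
        ht1' ht2' ht1' ht2 (by linarith))
  · rw [hψ4]
    exact hg4 _ _ (lt_abs_add_abs_of_eq_add z1 z2 (by ring) (by ring) ht1' ht2' (by linarith))

/-- Finite propagation speed for the explicit solution on `Ω₁` with compactly supported
data (initial data `g₁,…,g₄` supported in `{x ≤ y}`, boundary data `h₁⁻, h₁⁺`): for every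
`T > 0` there is `R > 0` such that the solution vanishes at all points of `Ω₁` with
`|t₁| ≤ T`, `|t₂| ≤ T` and `|z₁| + |z₂| > R`. -/
theorem stmt_19
    (g1 g2 g3 g4 : ℝ × ℝ → ℂ) (hminus hplus : ℝ × ℝ → ℂ)
    (hg1supp : HasCompactSupport g1) (hg2supp : HasCompactSupport g2)
    (hg3supp : HasCompactSupport g3) (hg4supp : HasCompactSupport g4)
    (hg1dom : ∀ q : ℝ × ℝ, q.2 < q.1 → g1 q = 0)
    (hg2dom : ∀ q : ℝ × ℝ, q.2 < q.1 → g2 q = 0)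
    (hg3dom : ∀ q : ℝ × ℝ, q.2 < q.1 → g3 q = 0)
    (hg4dom : ∀ q : ℝ × ℝ, q.2 < q.1 → g4 q = 0)
    (hhmsupp : HasCompactSupport hminus) (hhpsupp : HasCompactSupport hplus)
    (ψ1 ψ2 ψ3 ψ4 : ℝ × ℝ × ℝ × ℝ → ℂ)
    (hψ1 : ∀ t1 z1 t2 z2 : ℝ, ψ1 (t1, z1, t2, z2) = g1 (z1 - t1, z2 - t2))
    (hψ2 : ∀ t1 z1 t2 z2 : ℝ, ψ2 (t1, z1, t2, z2) =
      if z1 - t1 < z2 + t2 then g2 (z1 - t1, z2 + t2)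
      else hminus ((-z1 + z2 + t1 + t2) / 2, (z1 + z2 - t1 + t2) / 2))
    (hψ3 : ∀ t1 z1 t2 z2 : ℝ, ψ3 (t1, z1, t2, z2) =
      if z1 + t1 < z2 - t2 then g3 (z1 + t1, z2 - t2)
      else hplus ((z1 - z2 + t1 + t2) / 2, (z1 + z2 + t1 - t2) / 2))
    (hψ4 : ∀ t1 z1 t2 z2 : ℝ, ψ4 (t1, z1, t2, z2) = g4 (z1 + t1, z2 + t2)) :
    ∀ T : ℝ, 0 < T → ∃ R : ℝ, 0 < R ∧
      ∀ t1 z1 t2 z2 : ℝ, (t1, z1, t2, z2) ∈ Omega1 → |t1| ≤ T → |t2| ≤ T →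
        R < |z1| + |z2| →
        ψ1 (t1, z1, t2, z2) = 0 ∧ ψ2 (t1, z1, t2, z2) = 0 ∧
        ψ3 (t1, z1, t2, z2) = 0 ∧ ψ4 (t1, z1, t2, z2) = 0 :=
  stmt_19_general g1 g2 g3 g4 hminus hplus hg1supp hg2supp hg3supp hg4supp hhmsupp hhpsupp ψ1 ψ2 ψ3
    ψ4 hψ1 hψ2 hψ3 hψ4
end
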